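/- arXiv:2601.20290 — 5 statements merged into one kernel-verified Lean document; each statement's English description precedes it below -/
import Mathlib

section
/- Let α > 1/2, d ∈ ℕ, let γ = (γ_u)_{u ⊆ [1:d]} be non-negative weights with γ_∅ = 1, and M > 0. Define r_{α,γ}(k) = (1/γ_{supp(k)}) ∏_{j ∈ supp(k)} |k_j|^α for k ∈ ℤ^d (with r = +∞ if γ_{supp(k)} = 0), and the weighted hyperbolic cross A_d = {k ∈ ℤ^d : r_{α,γ}(k) ≤ M}. Then for any λ > 1/α, the cardinality of A_d satisfies |A_d| ≤ M^λ · Σ_{u ⊆ [1:d]} γ_u^λ (2ζ(αλ))^{|u|}, where ζ is the Riemann zeta function. -/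
open Finset

/-- The support of an integer frequency vector. -/
noncomputable def fsupp {d : ℕ} (k : Fin d → ℤ) : Finset (Fin d) :=
  Finset.univ.filter (fun j => k j ≠ 0)

/-- The weighted hyperbolic cross `{k : r_{α,γ}(k) ≤ M}`, where
`r_{α,γ}(k) = γ_{supp k}⁻¹ ∏_{j ∈ supp k} |k j|^α` with the convention `r = ∞`
when `γ_{supp k} = 0` (so such `k` are excluded). -/
def hyperCross {d : ℕ} (α : ℝ) (γ : Finset (Fin d) → ℝ) (M : ℝ) : Set (Fin d → ℤ) :=
  {k | 0 < γ (fsupp k) ∧ ∏ j ∈ fsupp k, (|(k j : ℝ)|) ^ α ≤ M * γ (fsupp k)}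


lemma g_summable (s : ℝ) (hs : 1 < s) : Summable (fun n : ℕ => 1 / ((n : ℝ) + 1) ^ s) := by
  have h := Real.summable_one_div_nat_rpow.mpr hs
  have h2 := (summable_nat_add_iff 1).mpr h
  refine h2.congr fun n => ?_
  push_cast
  ring_nf

lemma pos_sum_le (s : ℝ) (hs : 1 < s) (B : Finset ℤ) (hB : ∀ m ∈ B, 0 < m) :
    ∑ m ∈ B, |(m : ℝ)| ^ (-s) ≤ ∑' n : ℕ, 1 / ((n : ℝ) + 1) ^ s := by
  have hg := g_summable s hs
  have hinj : ∀ m ∈ B, ∀ m' ∈ B, (m - 1).toNat = (m' - 1).toNat → m = m' := by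
    intro m hm m' hm' h
    have := hB m hm; have := hB m' hm'; omega
  calc ∑ m ∈ B, |(m : ℝ)| ^ (-s)
      = ∑ n ∈ (B.image (fun m => (m - 1).toNat) : Finset ℕ), (1 : ℝ) / ((n : ℝ) + 1) ^ s := by
        rw [Finset.sum_image hinj]
        refine Finset.sum_congr rfl fun m hm => ?_
        have hm0 := hB m hm
        have h2 : (((m - 1).toNat : ℕ) : ℝ) + 1 = (m : ℝ) := by
          have : (((m - 1).toNat : ℕ) : ℤ) = m - 1 := Int.toNat_of_nonneg (by omega)
          have := congrArg (fun z : ℤ => (z : ℝ)) this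
          push_cast at this ⊢
          linarith
        rw [abs_of_pos (by exact_mod_cast hm0), h2, Real.rpow_neg (by positivity), one_div]
    _ ≤ ∑' n : ℕ, 1 / ((n : ℝ) + 1) ^ s :=
        Summable.sum_le_tsum _ (fun n _ => by positivity) hg

lemma zeta_bound (s : ℝ) (hs : 1 < s) (B : Finset ℤ) (hB : ∀ m ∈ B, m ≠ 0) :
    ∑ m ∈ B, |(m : ℝ)| ^ (-s) ≤ 2 * ∑' n : ℕ, 1 / ((n : ℝ) + 1) ^ s := by
  classical
  rw [← Finset.sum_filter_add_sum_filter_not B (fun m => 0 < m)]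
  have h1 : ∑ m ∈ B.filter (fun m => 0 < m), |(m : ℝ)| ^ (-s) ≤ ∑' n : ℕ, 1 / ((n : ℝ) + 1) ^ s :=
    pos_sum_le s hs _ (fun m hm => (Finset.mem_filter.mp hm).2)
  have h2 : ∑ m ∈ B.filter (fun m => ¬ 0 < m), |(m : ℝ)| ^ (-s) ≤ ∑' n : ℕ, 1 / ((n : ℝ) + 1) ^ s := by
    have : ∑ m ∈ B.filter (fun m => ¬ 0 < m), |(m : ℝ)| ^ (-s)
        = ∑ m ∈ (B.filter (fun m => ¬ 0 < m)).image (fun m => -m), |(m : ℝ)| ^ (-s) := by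
      rw [Finset.sum_image (fun x _ y _ h => by omega)]
      refine Finset.sum_congr rfl fun m _ => ?_
      push_cast
      rw [abs_neg]
    rw [this]
    refine pos_sum_le s hs _ fun m hm => ?_
    obtain ⟨m', hm', rfl⟩ := Finset.mem_image.mp hm
    have := hB m' (Finset.mem_filter.mp hm').1
    have := (Finset.mem_filter.mp hm').2
    omega
  linarith


lemma prod_sum_bound {d : ℕ} (s Z : ℝ) (hZ : 0 ≤ Z)
    (hzeta : ∀ B : Finset ℤ, (∀ m ∈ B, m ≠ 0) → ∑ m ∈ B, |(m : ℝ)| ^ (-s) ≤ Z)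
    (u : Finset (Fin d)) :
    ∀ F : Finset ((Fin d) → ℤ), (∀ k ∈ F, ∀ j ∈ u, k j ≠ 0) →
      (∀ k ∈ F, ∀ k' ∈ F, (∀ j ∈ u, k j = k' j) → k = k') →
      ∑ k ∈ F, ∏ j ∈ u, |(k j : ℝ)| ^ (-s) ≤ Z ^ u.card := by
  classical
  induction u using Finset.induction_on with
  | empty =>
    intro F _ hinj
    simp only [prod_empty, sum_const, card_empty, pow_zero, nsmul_eq_mul, mul_one]
    have : F.card ≤ 1 := Finset.card_le_one.mpr
      (fun a ha b hb => hinj a ha b hb (fun j hj => absurd hj (Finset.notMem_empty j)))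
    exact_mod_cast this
  | @insert a u ha ih =>
    intro F hne hinj
    have hmap : ∀ k ∈ F, k a ∈ F.image (fun k => k a) := fun k hk => Finset.mem_image_of_mem _ hk
    rw [← Finset.sum_fiberwise_of_maps_to hmap]
    have hstep : ∀ v ∈ F.image (fun k => k a),
        ∑ k ∈ F.filter (fun k => k a = v), ∏ j ∈ insert a u, |(k j : ℝ)| ^ (-s)
          ≤ |(v : ℝ)| ^ (-s) * Z ^ u.card := by
      intro v hv
      have heq : ∑ k ∈ F.filter (fun k => k a = v), ∏ j ∈ insert a u, |(k j : ℝ)| ^ (-s)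
          = |(v : ℝ)| ^ (-s) * ∑ k ∈ F.filter (fun k => k a = v), ∏ j ∈ u, |(k j : ℝ)| ^ (-s) := by
        rw [Finset.mul_sum]
        refine Finset.sum_congr rfl fun k hk => ?_
        rw [Finset.prod_insert ha, (Finset.mem_filter.mp hk).2]
      rw [heq]
      have hle : ∑ k ∈ F.filter (fun k => k a = v), ∏ j ∈ u, |(k j : ℝ)| ^ (-s) ≤ Z ^ u.card := by
        refine ih _ (fun k hk j hj => hne k (Finset.mem_filter.mp hk).1 j (Finset.mem_insert_of_mem hj))
          (fun k hk k' hk' h => hinj k (Finset.mem_filter.mp hk).1 k' (Finset.mem_filter.mp hk').1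
            fun j hj => ?_)
        rcases Finset.mem_insert.mp hj with rfl | hj
        · rw [(Finset.mem_filter.mp hk).2, (Finset.mem_filter.mp hk').2]
        · exact h j hj
      exact mul_le_mul_of_nonneg_left hle (by positivity)
    calc ∑ v ∈ F.image (fun k => k a), ∑ k ∈ F.filter (fun k => k a = v), ∏ j ∈ insert a u, |(k j : ℝ)| ^ (-s)
        ≤ ∑ v ∈ (F.image (fun k => k a) : Finset ℤ), |(v : ℝ)| ^ (-s) * Z ^ u.card := Finset.sum_le_sum hstep
      _ = (∑ v ∈ (F.image (fun k => k a) : Finset ℤ), |(v : ℝ)| ^ (-s)) * Z ^ u.card := by rw [Finset.sum_mul]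
      _ ≤ Z * Z ^ u.card := by
          refine mul_le_mul_of_nonneg_right (hzeta _ fun m hm => ?_) (by positivity)
          obtain ⟨k, hk, rfl⟩ := Finset.mem_image.mp hm
          exact hne k hk a (Finset.mem_insert_self a u)
      _ = Z ^ (insert a u).card := by rw [Finset.card_insert_of_notMem ha, pow_succ]; ring

theorem hyperCross_card_le {d : ℕ} (α : ℝ) (hα : 1 / 2 < α)
    (γ : Finset (Fin d) → ℝ) (hγ : ∀ u, 0 ≤ γ u) (hγe : γ ∅ = 1)
    (M : ℝ) (hM : 0 < M) (lam : ℝ) (hlam : 1 / α < lam) :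
    (hyperCross α γ M).Finite ∧
      (Nat.card (hyperCross α γ M) : ℝ) ≤
        M ^ lam * ∑ u : Finset (Fin d),
          γ u ^ lam * (2 * ∑' n : ℕ, 1 / ((n : ℝ) + 1) ^ (α * lam)) ^ (u.card) := by
  classical
  have hα0 : 0 < α := by linarith
  have hlam0 : 0 < lam := lt_trans (by positivity) hlam
  set s : ℝ := α * lam with hs_def
  have hs : 1 < s := by
    have := (div_lt_iff₀ hα0).mp hlam
    nlinarith
  set Z : ℝ := 2 * ∑' n : ℕ, 1 / ((n : ℝ) + 1) ^ s with hZ_def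
  have hZ0 : 0 ≤ Z := by
    have : 0 ≤ ∑' n : ℕ, 1 / ((n : ℝ) + 1) ^ s := tsum_nonneg (fun n => by positivity)
    linarith
  have hsupp : ∀ (k : Fin d → ℤ) (j : Fin d), j ∈ fsupp k ↔ k j ≠ 0 := by
    intro k j; simp [fsupp]
  have habs1 : ∀ (k : Fin d → ℤ), ∀ i ∈ fsupp k, (1 : ℝ) ≤ |(k i : ℝ)| := by
    intro k i hi
    have h1 : 1 ≤ |k i| := Int.one_le_abs ((hsupp k i).mp hi)
    have : ((1 : ℤ) : ℝ) ≤ ((|k i| : ℤ) : ℝ) := by exact_mod_cast h1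
    rwa [Int.cast_abs, Int.cast_one] at this
  -- uniform bound
  set C : ℝ := M * ∑ u : Finset (Fin d), γ u with hC_def
  have hCb : ∀ u : Finset (Fin d), M * γ u ≤ C := by
    intro u
    have h1 : γ u ≤ ∑ u' : Finset (Fin d), γ u' :=
      Finset.single_le_sum (fun i _ => hγ i) (Finset.mem_univ u)
    exact mul_le_mul_of_nonneg_left h1 hM.le
  have hC0 : 0 < C := by
    have h1 : (1 : ℝ) ≤ ∑ u' : Finset (Fin d), γ u' := by
      have := Finset.single_le_sum (fun i (_ : i ∈ Finset.univ) => hγ i) (Finset.mem_univ (∅ : Finset (Fin d)))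
      rwa [hγe] at this
    nlinarith
  -- finiteness
  have hfin : (hyperCross α γ M).Finite := by
    set R : ℤ := ⌈C ^ (1 / α)⌉ with hR_def
    have hR0 : (0 : ℤ) ≤ R := Int.ceil_nonneg (by positivity)
    apply Set.Finite.subset (Set.Finite.pi (fun _ : Fin d => Set.finite_Icc (-R) R))
    intro k hk
    rw [Set.mem_univ_pi]
    intro j
    rw [Set.mem_Icc]
    by_cases hj : k j = 0
    · rw [hj]; omega
    · obtain ⟨hpos, hle⟩ := hk
      have hjsupp : j ∈ fsupp k := (hsupp k j).mpr hj
      have hone : ∀ i ∈ fsupp k, (1 : ℝ) ≤ |(k i : ℝ)| ^ α :=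
        fun i hi => Real.one_le_rpow (habs1 k i hi) hα0.le
      have hprod_e : (1 : ℝ) ≤ ∏ i ∈ (fsupp k).erase j, |(k i : ℝ)| ^ α := by
        calc (1 : ℝ) = ∏ _i ∈ (fsupp k).erase j, (1 : ℝ) := by simp
          _ ≤ ∏ i ∈ (fsupp k).erase j, |(k i : ℝ)| ^ α :=
              Finset.prod_le_prod (fun _ _ => zero_le_one)
                (fun i hi => hone i (Finset.mem_of_mem_erase hi))
      have hsingle : |(k j : ℝ)| ^ α ≤ ∏ i ∈ fsupp k, |(k i : ℝ)| ^ α := by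
        rw [← Finset.mul_prod_erase _ _ hjsupp]
        exact le_mul_of_one_le_right (Real.rpow_nonneg (abs_nonneg _) α) hprod_e
      have h1 : |(k j : ℝ)| ^ α ≤ C := le_trans hsingle (le_trans hle (hCb _))
      have h2 : |(k j : ℝ)| ≤ C ^ (1 / α) := by
        have h3 := Real.rpow_le_rpow (by positivity) h1 (by positivity : (0:ℝ) ≤ 1 / α)
        rwa [← Real.rpow_mul (abs_nonneg _), mul_one_div_cancel hα0.ne', Real.rpow_one] at h3
      have h4 : |(k j : ℝ)| ≤ (R : ℝ) := le_trans h2 (Int.le_ceil _)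
      have h5 : |k j| ≤ R := by
        rw [← Int.cast_abs] at h4; exact_mod_cast h4
      exact abs_le.mp h5
  refine ⟨hfin, ?_⟩
  set F := hfin.toFinset with hF_def
  have hcard : (Nat.card (hyperCross α γ M) : ℝ) = (F.card : ℝ) := by
    rw [Nat.card_coe_set_eq, Set.ncard_eq_toFinset_card _ hfin]
  have hpoint : ∀ k ∈ F, (1 : ℝ) ≤ (M * γ (fsupp k)) ^ lam * ∏ j ∈ fsupp k, |(k j : ℝ)| ^ (-s) := by
    intro k hk
    rw [hF_def, Set.Finite.mem_toFinset] at hk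
    obtain ⟨hpos, hle⟩ := hk
    have hPs : 0 < ∏ j ∈ fsupp k, |(k j : ℝ)| ^ s :=
      Finset.prod_pos fun i hi => Real.rpow_pos_of_pos (lt_of_lt_of_le one_pos (habs1 k i hi)) s
    have h1 : (∏ j ∈ fsupp k, |(k j : ℝ)| ^ α) ^ lam ≤ (M * γ (fsupp k)) ^ lam :=
      Real.rpow_le_rpow (Finset.prod_nonneg fun i _ => Real.rpow_nonneg (abs_nonneg _) α) hle hlam0.le
    have h2 : (∏ j ∈ fsupp k, |(k j : ℝ)| ^ α) ^ lam = ∏ j ∈ fsupp k, |(k j : ℝ)| ^ s := by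
      rw [← Real.finset_prod_rpow _ _ (fun i _ => Real.rpow_nonneg (abs_nonneg _) α) lam]
      exact Finset.prod_congr rfl fun i _ => by
        rw [← Real.rpow_mul (abs_nonneg _), hs_def]
    have h3 : ∏ j ∈ fsupp k, |(k j : ℝ)| ^ (-s) = (∏ j ∈ fsupp k, |(k j : ℝ)| ^ s)⁻¹ := by
      rw [← Finset.prod_inv_distrib]
      exact Finset.prod_congr rfl fun i _ => by rw [← Real.rpow_neg (abs_nonneg _)]
    rw [h3]
    have h4 : ∏ j ∈ fsupp k, |(k j : ℝ)| ^ s ≤ (M * γ (fsupp k)) ^ lam := h2 ▸ h1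
    have h5 := mul_le_mul_of_nonneg_right h4 (inv_nonneg.mpr hPs.le)
    rwa [mul_inv_cancel₀ hPs.ne'] at h5
  have key : (F.card : ℝ) ≤ ∑ k ∈ F, (M * γ (fsupp k)) ^ lam * ∏ j ∈ fsupp k, |(k j : ℝ)| ^ (-s) := by
    calc (F.card : ℝ) = ∑ _k ∈ F, (1 : ℝ) := by simp
      _ ≤ _ := Finset.sum_le_sum hpoint
  have fiber : ∑ k ∈ F, (M * γ (fsupp k)) ^ lam * ∏ j ∈ fsupp k, |(k j : ℝ)| ^ (-s)
      = ∑ u : Finset (Fin d), ∑ k ∈ F.filter (fun k => fsupp k = u),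
          (M * γ u) ^ lam * ∏ j ∈ u, |(k j : ℝ)| ^ (-s) := by
    rw [← Finset.sum_fiberwise_of_maps_to (fun k _ => Finset.mem_univ (fsupp k))
      (fun k => (M * γ (fsupp k)) ^ lam * ∏ j ∈ fsupp k, |(k j : ℝ)| ^ (-s))]
    exact Finset.sum_congr rfl fun u _ => Finset.sum_congr rfl fun k hk => by
      rw [(Finset.mem_filter.mp hk).2]
  have hub : ∀ u : Finset (Fin d),
      ∑ k ∈ F.filter (fun k => fsupp k = u), (M * γ u) ^ lam * ∏ j ∈ u, |(k j : ℝ)| ^ (-s)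
        ≤ (M * γ u) ^ lam * Z ^ u.card := by
    intro u
    rw [← Finset.mul_sum]
    refine mul_le_mul_of_nonneg_left ?_ (Real.rpow_nonneg (mul_nonneg hM.le (hγ u)) lam)
    refine prod_sum_bound s Z hZ0 (fun B hB => zeta_bound s hs B hB) u _ ?_ ?_
    · intro k hk j hj
      exact (hsupp k j).mp (((Finset.mem_filter.mp hk).2) ▸ hj)
    · intro k hk k' hk' h
      funext j
      by_cases hj : j ∈ u
      · exact h j hj
      · have h1 : k j = 0 := by
          by_contra hc; exact hj (((Finset.mem_filter.mp hk).2) ▸ (hsupp k j).mpr hc)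
        have h2 : k' j = 0 := by
          by_contra hc; exact hj (((Finset.mem_filter.mp hk').2) ▸ (hsupp k' j).mpr hc)
        rw [h1, h2]
  calc (Nat.card (hyperCross α γ M) : ℝ) = (F.card : ℝ) := hcard
    _ ≤ ∑ k ∈ F, (M * γ (fsupp k)) ^ lam * ∏ j ∈ fsupp k, |(k j : ℝ)| ^ (-s) := key
    _ = ∑ u : Finset (Fin d), ∑ k ∈ F.filter (fun k => fsupp k = u),
          (M * γ u) ^ lam * ∏ j ∈ u, |(k j : ℝ)| ^ (-s) := fiber
    _ ≤ ∑ u : Finset (Fin d), (M * γ u) ^ lam * Z ^ u.card :=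
        Finset.sum_le_sum fun u _ => hub u
    _ = M ^ lam * ∑ u : Finset (Fin d), γ u ^ lam * Z ^ u.card := by
        rw [Finset.mul_sum]
        exact Finset.sum_congr rfl fun u _ => by
          rw [Real.mul_rpow hM.le (hγ u)]; ring
end

section
/- With the same setup as the hyperbolic cross size bound, assume additionally M ≥ 1 and λ ∈ (1/α, 2). Then Σ_{k ∉ A_d} 1/r_{α,γ}(k)^2 ≤ M^{-(2-λ)} · (8(3-λ)/(2-λ)) · Σ_{u ⊆ [1:d]} γ_u^λ (2ζ(αλ))^{|u|}. -/
set_option maxHeartbeats 1000000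


open Finset

/-- `1 / r_{α,γ}(k)^2`, interpreted as `0` when `γ_{supp k} = 0`. -/
noncomputable def invRsq {d : ℕ} (α : ℝ) (γ : Finset (Fin d) → ℝ) (k : Fin d → ℤ) : ℝ :=
  if 0 < γ (fsupp k) then
    (γ (fsupp k)) ^ 2 / (∏ j ∈ fsupp k, (|(k j : ℝ)|) ^ α) ^ 2
  else 0


lemma hasSum_pi_fin {X : Type*} {h : X → ℝ} (h0 : ∀ x, 0 ≤ h x) (hs : Summable h) :
    ∀ n : ℕ, HasSum (fun f : Fin n → X => ∏ i, h (f i)) ((∑' x, h x) ^ n) := by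
  intro n
  induction n with
  | zero =>
      have h1 : HasSum (fun f : Fin 0 → X => ∏ i, h (f i))
          ((fun f : Fin 0 → X => ∏ i, h (f i)) default) :=
        hasSum_single default (fun b hb => absurd (Subsingleton.elim b default) hb)
      simp only [univ_eq_empty, prod_empty, pow_zero] at h1 ⊢
      exact h1
  | succ n ih =>
      have a1 : (0 : X → ℝ) ≤ h := h0
      have a2 : (0 : (Fin n → X) → ℝ) ≤ fun f => ∏ i, h (f i) :=
        fun f => Finset.prod_nonneg fun i _ => h0 _
      have hsummul : Summable (fun p : X × (Fin n → X) => h p.1 * ∏ i, h (p.2 i)) :=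
        Summable.mul_of_nonneg (f := h) (g := fun f : Fin n → X => ∏ i, h (f i)) hs ih.summable a1 a2
      have hprod : HasSum (fun p : X × (Fin n → X) => h p.1 * ∏ i, h (p.2 i))
          ((∑' x, h x) * (∑' x, h x) ^ n) := HasSum.mul (f := h) (g := fun f : Fin n → X => ∏ i, h (f i)) hs.hasSum ih hsummul
      rw [pow_succ']
      refine (Fin.consEquiv (fun _ => X)).hasSum_iff.mp ?_
      convert hprod using 2 with p
      simp [Fin.prod_univ_succ, Fin.consEquiv]

lemma hasSum_pi {ι X : Type*} [Fintype ι] {h : X → ℝ} (h0 : ∀ x, 0 ≤ h x) (hs : Summable h) :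
    HasSum (fun f : ι → X => ∏ i, h (f i)) ((∑' x, h x) ^ (Fintype.card ι)) := by
  classical
  refine (Equiv.arrowCongr (Fintype.equivFin ι).symm (Equiv.refl X)).hasSum_iff.mp ?_
  convert hasSum_pi_fin h0 hs (Fintype.card ι) using 2 with g
  simp only [Function.comp, Equiv.arrowCongr_apply, Equiv.coe_refl, Equiv.symm_symm]
  exact Equiv.prod_comp (Fintype.equivFin ι) (fun j => h (g j))

section W
variable (α lam : ℝ)

/-- The weight function on `ℤ`; vanishes at `0`. -/
noncomputable def Wfun (m : ℤ) : ℝ := (|(m : ℝ)| ^ α) ^ (-lam)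

lemma Wfun_nonneg (m : ℤ) : 0 ≤ Wfun α lam m := Real.rpow_nonneg (Real.rpow_nonneg (abs_nonneg _) _) _

variable {α lam : ℝ}

lemma Wfun_zero (hα : 0 < α) (hlam : 0 < lam) : Wfun α lam 0 = 0 := by
  simp only [Wfun, Int.cast_zero, abs_zero]
  rw [Real.zero_rpow (ne_of_gt hα), Real.zero_rpow (by simpa using ne_of_gt hlam)]

lemma Wfun_val (m : ℤ) :
    Wfun α lam m = 1 / |(m : ℝ)| ^ (α * lam) := by
  rw [Wfun, ← Real.rpow_mul (abs_nonneg _), mul_neg, Real.rpow_neg (abs_nonneg _), one_div]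

lemma hasSum_Wfun (hα : 0 < α) (hlam : 0 < lam) (hβ : 1 < α * lam) :
    HasSum (Wfun α lam)
      (2 * ∑' n : ℕ, 1 / ((n : ℝ) + 1) ^ (α * lam)) := by
  set q : ℕ → ℝ := fun n => 1 / ((n : ℝ) + 1) ^ (α * lam) with hqdef
  set Z : ℝ := ∑' n : ℕ, 1 / ((n : ℝ) + 1) ^ (α * lam) with hZdef
  have hqs : Summable q := by
    have h1 : Summable (fun n : ℕ => 1 / (n : ℝ) ^ (α * lam)) :=
      Real.summable_one_div_nat_rpow.mpr hβ
    have h2 := (summable_nat_add_iff 1).mpr h1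
    refine h2.congr fun n => ?_
    push_cast
    rfl
  have hqζ : HasSum q Z := hqs.hasSum
  have hg : HasSum (fun n : ℕ => Wfun α lam (Int.negSucc n)) Z := by
    have heq : (fun n : ℕ => Wfun α lam (Int.negSucc n)) = q := by
      funext n
      have hc : |((Int.negSucc n : ℤ) : ℝ)| = (n : ℝ) + 1 := by
        rw [Int.negSucc_eq]
        push_cast
        rw [abs_neg, abs_of_nonneg (by positivity)]
      rw [Wfun_val, hc]
    rw [heq]; exact hqζ
  have hf : HasSum (fun n : ℕ => Wfun α lam (Int.ofNat n)) Z := by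
    have h1 : HasSum (fun n : ℕ => Wfun α lam (Int.ofNat (n + 1))) Z := by
      have heq : (fun n : ℕ => Wfun α lam (Int.ofNat (n + 1))) = q := by
        funext n
        have hc : |((Int.ofNat (n + 1) : ℤ) : ℝ)| = (n : ℝ) + 1 := by
          rw [Int.ofNat_eq_natCast]
          push_cast
          rw [abs_of_nonneg (by positivity)]
        rw [Wfun_val, hc]
      rw [heq]; exact hqζ
    have h2 := (hasSum_nat_add_iff (f := fun n : ℕ => Wfun α lam (Int.ofNat n)) 1).mp h1
    simpa [Wfun_zero hα hlam] using h2
  have h3 : HasSum (Int.rec (fun n : ℕ => Wfun α lam (Int.ofNat n))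
      (fun n : ℕ => Wfun α lam (Int.negSucc n)) : ℤ → ℝ) (Z + Z) := hf.int_rec hg
  have heq : (Int.rec (fun n : ℕ => Wfun α lam (Int.ofNat n))
      (fun n : ℕ => Wfun α lam (Int.negSucc n)) : ℤ → ℝ) = Wfun α lam := by
    funext m
    cases m <;> rfl
  rw [heq] at h3
  rw [two_mul]
  exact h3
end W



lemma mem_fsupp_iff {d : ℕ} (k : Fin d → ℤ) (j : Fin d) : j ∈ fsupp k ↔ k j ≠ 0 := by
  simp [fsupp]

/-- Parametrization of `ℤ^d` by support and nonzero values. -/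
noncomputable def Phi {d : ℕ} (p : Σ u : Finset (Fin d), ({j // j ∈ u} → {m : ℤ // m ≠ 0})) :
    Fin d → ℤ :=
  fun j => if h : j ∈ p.1 then (p.2 ⟨j, h⟩ : ℤ) else 0

lemma fsupp_Phi {d : ℕ} (p : Σ u : Finset (Fin d), ({j // j ∈ u} → {m : ℤ // m ≠ 0})) :
    fsupp (Phi p) = p.1 := by
  ext j
  by_cases h : j ∈ p.1
  · simp [mem_fsupp_iff, Phi, h, (p.2 ⟨j, h⟩).2]
  · simp [mem_fsupp_iff, Phi, h]

lemma Phi_bij {d : ℕ} : Function.Bijective (Phi (d := d)) := by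
  constructor
  · rintro ⟨u, f⟩ ⟨v, g⟩ h
    have hu : u = v := by
      have h1 := fsupp_Phi ⟨u, f⟩
      have h2 := fsupp_Phi ⟨v, g⟩
      simp only at h1 h2
      rw [← h1, ← h2, h]
    subst hu
    have hfg : f = g := by
      funext j
      apply Subtype.ext
      have h2 := congrFun h j.1
      simpa [Phi, j.2] using h2
    rw [hfg]
  · intro k
    refine ⟨⟨fsupp k, fun j => ⟨k j.1, (mem_fsupp_iff k j.1).mp j.2⟩⟩, ?_⟩
    funext j
    by_cases h : j ∈ fsupp k
    · simp [Phi, h]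
    · simp only [Phi, dif_neg h]
      have h2 := (mem_fsupp_iff k j).not.mp h
      simp only [not_not] at h2
      exact h2.symm

lemma hasSum_total {d : ℕ} {α lam : ℝ} (hα : 0 < α) (hlam : 0 < lam) (hβ : 1 < α * lam)
    (γ : Finset (Fin d) → ℝ) (hγ : ∀ u, 0 ≤ γ u) :
    HasSum
      (fun k : Fin d → ℤ =>
        γ (fsupp k) ^ lam * (∏ j ∈ fsupp k, (|(k j : ℝ)|) ^ α) ^ (-lam))
      (∑ u : Finset (Fin d),
        γ u ^ lam * (2 * ∑' n : ℕ, 1 / ((n : ℝ) + 1) ^ (α * lam)) ^ u.card) := by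
  classical
  set Z : ℝ := 2 * ∑' n : ℕ, 1 / ((n : ℝ) + 1) ^ (α * lam) with hZdef
  have hW : HasSum (Wfun α lam) Z := hasSum_Wfun hα hlam hβ
  have hsupp : Function.support (Wfun α lam) ⊆ {m : ℤ | m ≠ 0} := by
    intro m hm
    simp only [Set.mem_setOf_eq]
    intro h0
    subst h0
    exact hm (Wfun_zero hα hlam)
  have hw : HasSum (fun m : {m : ℤ // m ≠ 0} => Wfun α lam m) Z :=
    (hasSum_subtype_iff_of_support_subset hsupp).mpr hW
  set F : (Σ u : Finset (Fin d), ({j // j ∈ u} → {m : ℤ // m ≠ 0})) → ℝ :=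
    fun p => γ p.1 ^ lam * ∏ j, Wfun α lam (p.2 j) with hFdef
  have hfib : ∀ u : Finset (Fin d),
      HasSum (fun f : {j // j ∈ u} → {m : ℤ // m ≠ 0} =>
        γ u ^ lam * ∏ j, Wfun α lam (f j)) (γ u ^ lam * Z ^ u.card) := by
    intro u
    have h1 := (hasSum_pi (ι := {j // j ∈ u})
      (h := fun m : {m : ℤ // m ≠ 0} => Wfun α lam m)
      (fun m => Wfun_nonneg α lam _) hw.summable).mul_left (γ u ^ lam)
    rwa [hw.tsum_eq, Fintype.card_coe] at h1
  have hFnn : ∀ p, 0 ≤ F p := fun p =>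
    mul_nonneg (Real.rpow_nonneg (hγ _) _)
      (Finset.prod_nonneg fun j _ => Wfun_nonneg α lam _)
  have hFs : Summable F :=
    (summable_sigma_of_nonneg hFnn).mpr
      ⟨fun u => (hfib u).summable, (hasSum_fintype _).summable⟩
  have hFt : ∑' p, F p = ∑ u : Finset (Fin d), γ u ^ lam * Z ^ u.card := by
    rw [Summable.tsum_sigma' (fun u => (hfib u).summable) hFs]
    rw [tsum_fintype]
    exact Finset.sum_congr rfl fun u _ => (hfib u).tsum_eq
  have hFhs : HasSum F (∑ u : Finset (Fin d), γ u ^ lam * Z ^ u.card) := by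
    have := hFs.hasSum
    rwa [hFt] at this
  set e : (Σ u : Finset (Fin d), ({j // j ∈ u} → {m : ℤ // m ≠ 0})) ≃ (Fin d → ℤ) :=
    Equiv.ofBijective Phi Phi_bij with hedef
  refine e.hasSum_iff.mp ?_
  have hcomp : ∀ p, γ (fsupp (Phi p)) ^ lam *
      (∏ j ∈ fsupp (Phi p), (|(Phi p j : ℝ)|) ^ α) ^ (-lam) = F p := by
    rintro ⟨u, f⟩
    have hs := fsupp_Phi ⟨u, f⟩
    simp only at hs
    rw [hs]
    simp only [hFdef]
    congr 1
    rw [← Real.finset_prod_rpow u _ (fun j _ => Real.rpow_nonneg (abs_nonneg _) _) (-lam)]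
    rw [← Finset.prod_coe_sort u (fun j => (|(Phi ⟨u, f⟩ j : ℝ)| ^ α) ^ (-lam))]
    refine Finset.prod_congr rfl fun j _ => ?_
    have hj : Phi ⟨u, f⟩ j.1 = f j := by
      simp [Phi, j.2]
    rw [show ((|(Phi ⟨u, f⟩ j.1 : ℝ)| ^ α) ^ (-lam)) = Wfun α lam (Phi ⟨u, f⟩ j.1) from rfl, hj]
  have : (fun k : Fin d → ℤ =>
      γ (fsupp k) ^ lam * (∏ j ∈ fsupp k, (|(k j : ℝ)|) ^ α) ^ (-lam)) ∘ e = F := by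
    funext p
    exact hcomp p
  rw [this]
  exact hFhs

theorem hyperCross_tail_sum_le {d : ℕ} (α : ℝ) (hα : 1 / 2 < α)
    (γ : Finset (Fin d) → ℝ) (hγ : ∀ u, 0 ≤ γ u) (hγe : γ ∅ = 1)
    (M : ℝ) (hM : 1 ≤ M) (lam : ℝ) (hlam1 : 1 / α < lam) (hlam2 : lam < 2) :
    (∑' k : {k : Fin d → ℤ // k ∉ hyperCross α γ M}, invRsq α γ (k : Fin d → ℤ)) ≤
      (1 / M ^ (2 - lam)) * (8 * (3 - lam) / (2 - lam)) *
        ∑ u : Finset (Fin d),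
          γ u ^ lam * (2 * ∑' n : ℕ, 1 / ((n : ℝ) + 1) ^ (α * lam)) ^ (u.card) := by
  classical
  have hα0 : 0 < α := lt_trans (by norm_num) hα
  have hlam0 : 0 < lam := lt_trans (one_div_pos.mpr hα0) hlam1
  have hβ : 1 < α * lam := by
    rw [mul_comm]
    exact (div_lt_iff₀ hα0).mp hlam1
  have hM0 : 0 < M := lt_of_lt_of_le one_pos hM
  set Z : ℝ := 2 * ∑' n : ℕ, 1 / ((n : ℝ) + 1) ^ (α * lam) with hZdef
  set T : ℝ := ∑ u : Finset (Fin d), γ u ^ lam * Z ^ u.card with hTdef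
  set g : (Fin d → ℤ) → ℝ := fun k =>
    γ (fsupp k) ^ lam * (∏ j ∈ fsupp k, (|(k j : ℝ)|) ^ α) ^ (-lam) with hgdef
  have htot : HasSum g T := hasSum_total hα0 hlam0 hβ γ hγ
  have hgnn : ∀ k, 0 ≤ g k := fun k =>
    mul_nonneg (Real.rpow_nonneg (hγ _) _) (Real.rpow_nonneg
      (Finset.prod_nonneg fun j _ => Real.rpow_nonneg (abs_nonneg _) _) _)
  set c : ℝ := M ^ (lam - 2) with hcdef
  have hc0 : 0 ≤ c := Real.rpow_nonneg hM0.le _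
  have hinn : ∀ k, 0 ≤ invRsq α γ k := by
    intro k
    rw [invRsq]
    split_ifs with h
    · positivity
    · exact le_refl 0
  have hpt : ∀ k : {k : Fin d → ℤ // k ∉ hyperCross α γ M},
      invRsq α γ (k : Fin d → ℤ) ≤ c * g (k : Fin d → ℤ) := by
    rintro ⟨k, hk⟩
    simp only [hyperCross, Set.mem_setOf_eq, not_and, not_le] at hk
    by_cases hpos : 0 < γ (fsupp k)
    · set a : ℝ := γ (fsupp k) with hadef
      set b : ℝ := ∏ j ∈ fsupp k, (|(k j : ℝ)|) ^ α with hbdef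
      have hb0 : 0 < b := Finset.prod_pos fun j hj =>
        Real.rpow_pos_of_pos (abs_pos.mpr (Int.cast_ne_zero.mpr ((mem_fsupp_iff k j).mp hj))) α
      have hMb : M * a < b := hk hpos
      rw [invRsq, if_pos hpos]
      have h1 : a / b ≤ 1 / M := by
        rw [div_le_div_iff₀ hb0 hM0]
        nlinarith
      have h2 : (a / b) ^ (2 - lam) ≤ (1 / M) ^ (2 - lam) :=
        Real.rpow_le_rpow (by positivity) h1 (by linarith)
      have h3 : (1 / M) ^ (2 - lam) = c := by
        rw [one_div, Real.inv_rpow hM0.le, ← Real.rpow_neg hM0.le]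
        congr 1
        ring
      have hid : a ^ 2 / b ^ 2 = (a ^ lam * b ^ (-lam)) * (a / b) ^ (2 - lam) := by
        calc a ^ 2 / b ^ 2 = a ^ (2 : ℝ) / b ^ (2 : ℝ) := by
              rw [← Real.rpow_natCast a 2, ← Real.rpow_natCast b 2]
              try norm_num
        _ = (a ^ lam * a ^ (2 - lam)) / (b ^ lam * b ^ (2 - lam)) := by
              rw [← Real.rpow_add hpos, ← Real.rpow_add hb0]
              try norm_num
        _ = (a ^ lam * b ^ (-lam)) * (a / b) ^ (2 - lam) := by
              rw [Real.div_rpow hpos.le hb0.le, Real.rpow_neg hb0.le]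
              have hbl : (0:ℝ) < b ^ lam := Real.rpow_pos_of_pos hb0 lam
              have hbl2 : (0:ℝ) < b ^ (2 - lam) := Real.rpow_pos_of_pos hb0 (2 - lam)
              field_simp
              try ring
      rw [hid]
      calc (a ^ lam * b ^ (-lam)) * (a / b) ^ (2 - lam)
          ≤ (a ^ lam * b ^ (-lam)) * c := by
            refine mul_le_mul_of_nonneg_left ?_ ?_
            · rw [← h3]; exact h2
            · exact mul_nonneg (Real.rpow_nonneg hpos.le _) (Real.rpow_nonneg hb0.le _)
      _ = c * g k := by rw [hgdef]; ring
    · have ha : γ (fsupp k) = 0 := le_antisymm (not_lt.mp hpos) (hγ _)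
      rw [invRsq, if_neg hpos, hgdef]
      simp only [ha, Real.zero_rpow (ne_of_gt hlam0), zero_mul, mul_zero]
      exact le_refl 0
  have hsub : Summable ((fun k => c * g k) ∘ ((↑) : {k : Fin d → ℤ // k ∉ hyperCross α γ M} → (Fin d → ℤ))) :=
    (htot.summable.mul_left c).subtype _
  have h5 : (∑' k : {k : Fin d → ℤ // k ∉ hyperCross α γ M}, invRsq α γ (k : Fin d → ℤ)) ≤
      ∑' k : {k : Fin d → ℤ // k ∉ hyperCross α γ M}, c * g (k : Fin d → ℤ) :=
    Summable.tsum_le_tsum hpt (Summable.of_nonneg_of_le (fun k => hinn _) hpt hsub) hsub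
  have h6 : (∑' k : {k : Fin d → ℤ // k ∉ hyperCross α γ M}, c * g (k : Fin d → ℤ)) =
      c * ∑' k : {k : Fin d → ℤ // k ∉ hyperCross α γ M}, g (k : Fin d → ℤ) := tsum_mul_left
  have h7 : (∑' k : {k : Fin d → ℤ // k ∉ hyperCross α γ M}, g (k : Fin d → ℤ)) ≤ T := by
    have e1 : (∑' k : {k : Fin d → ℤ // k ∉ hyperCross α γ M}, g (k : Fin d → ℤ)) =
        ∑' k : Fin d → ℤ, Set.indicator {k : Fin d → ℤ | k ∉ hyperCross α γ M} g k :=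
      tsum_subtype {k : Fin d → ℤ | k ∉ hyperCross α γ M} g
    rw [e1]
    calc (∑' k : Fin d → ℤ, Set.indicator {k : Fin d → ℤ | k ∉ hyperCross α γ M} g k)
        ≤ ∑' k : Fin d → ℤ, g k :=
          Summable.tsum_le_tsum (fun k => Set.indicator_le_self' (fun x _ => hgnn x) k)
            (htot.summable.indicator _) htot.summable
    _ = T := htot.tsum_eq
  have hZnn : 0 ≤ Z := by
    rw [hZdef]
    have : 0 ≤ ∑' n : ℕ, 1 / ((n : ℝ) + 1) ^ (α * lam) :=
      tsum_nonneg fun n => by positivity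
    linarith
  have hT0 : 0 ≤ T := Finset.sum_nonneg fun u _ =>
    mul_nonneg (Real.rpow_nonneg (hγ u) _) (pow_nonneg hZnn _)
  have hcM : c = 1 / M ^ (2 - lam) := by
    rw [hcdef, one_div, ← Real.rpow_neg hM0.le]
    congr 1
    ring
  have hC1 : 1 ≤ 8 * (3 - lam) / (2 - lam) := by
    rw [le_div_iff₀ (by linarith)]
    nlinarith
  calc (∑' k : {k : Fin d → ℤ // k ∉ hyperCross α γ M}, invRsq α γ (k : Fin d → ℤ))
      ≤ c * ∑' k : {k : Fin d → ℤ // k ∉ hyperCross α γ M}, g (k : Fin d → ℤ) := by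
        rw [← h6]; exact h5
  _ ≤ c * T := mul_le_mul_of_nonneg_left h7 hc0
  _ = (1 / M ^ (2 - lam)) * T := by rw [hcM]
  _ ≤ (1 / M ^ (2 - lam)) * ((8 * (3 - lam) / (2 - lam)) * T) := by
        refine mul_le_mul_of_nonneg_left (le_mul_of_one_le_left hT0 hC1) ?_
        positivity
  _ = (1 / M ^ (2 - lam)) * (8 * (3 - lam) / (2 - lam)) * T := by ring
end

section
/- Let N be a prime number and g = (g_1, g_2) ∈ {1, …, N-1}^2. Then there exists h = (h_1, h_2) ∈ ℤ^2 with h_1 g_1 + h_2 g_2 ≡ 0 (mod N) and 0 < |h_1| ≤ √N and 0 < |h_2| ≤ √N. -/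
theorem short_dual_vector_exists (N : ℕ) (hN : N.Prime) (g₁ g₂ : ℤ)
    (hg₁ : 1 ≤ g₁ ∧ g₁ ≤ (N : ℤ) - 1) (hg₂ : 1 ≤ g₂ ∧ g₂ ≤ (N : ℤ) - 1) :
    ∃ h₁ h₂ : ℤ, (h₁ * g₁ + h₂ * g₂) % (N : ℤ) = 0 ∧
      0 < |h₁| ∧ (|h₁| : ℝ) ≤ Real.sqrt N ∧
      0 < |h₂| ∧ (|h₂| : ℝ) ≤ Real.sqrt N := by
  haveI : Fact N.Prime := ⟨hN⟩
  set n := N.sqrt with hn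
  have hcard : Fintype.card (ZMod N) < Fintype.card (Fin (n+1) × Fin (n+1)) := by
    have := Nat.lt_succ_sqrt N
    simpa [ZMod.card, Fintype.card_prod] using this
  obtain ⟨a, b, hab, hfab⟩ := Fintype.exists_ne_map_eq_of_card_lt
    (fun p : Fin (n+1) × Fin (n+1) =>
      (((p.1 : ℤ) * g₁ + (p.2 : ℤ) * g₂ : ℤ) : ZMod N)) hcard
  set h₁ : ℤ := (a.1 : ℤ) - (b.1 : ℤ) with hh1
  set h₂ : ℤ := (a.2 : ℤ) - (b.2 : ℤ) with hh2
  have hdvd : (N : ℤ) ∣ h₁ * g₁ + h₂ * g₂ := by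
    have : ((h₁ * g₁ + h₂ * g₂ : ℤ) : ZMod N) = 0 := by
      have h1 : (((a.1 : ℤ) * g₁ + (a.2 : ℤ) * g₂ : ℤ) : ZMod N)
          = (((b.1 : ℤ) * g₁ + (b.2 : ℤ) * g₂ : ℤ) : ZMod N) := hfab
      rw [hh1, hh2]
      push_cast at h1 ⊢
      linear_combination h1
    exact (ZMod.intCast_zmod_eq_zero_iff_dvd _ N).mp this
  have hnN : (n : ℤ) < (N : ℤ) := by
    exact_mod_cast Nat.sqrt_lt_self hN.one_lt
  have hb1 : |h₁| ≤ (n : ℤ) := by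
    have := a.1.isLt; have := b.1.isLt
    rw [abs_le]; omega
  have hb2 : |h₂| ≤ (n : ℤ) := by
    have := a.2.isLt; have := b.2.isLt
    rw [abs_le]; omega
  have hNprime : Prime (N : ℤ) := Nat.prime_iff_prime_int.mp hN
  -- neither g₁ nor g₂ is divisible by N
  have hng1 : ¬ (N : ℤ) ∣ g₁ := fun h => by
    have := Int.le_of_dvd (by omega) h; omega
  have hng2 : ¬ (N : ℤ) ∣ g₂ := fun h => by
    have := Int.le_of_dvd (by omega) h; omega
  have hsmall : ∀ x : ℤ, |x| ≤ (n : ℤ) → (N : ℤ) ∣ x → x = 0 := by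
    intro x hx hdx
    by_contra hx0
    have := Int.le_of_dvd (abs_pos.mpr hx0) ((dvd_abs _ _).mpr hdx)
    omega
  have h1ne : h₁ ≠ 0 := by
    intro h0
    have hd2 : (N : ℤ) ∣ h₂ * g₂ := by
      have : h₁ * g₁ = 0 := by rw [h0]; ring
      simpa [this] using hdvd
    have : (N : ℤ) ∣ h₂ := (hNprime.dvd_mul.mp hd2).resolve_right hng2
    have h2z : h₂ = 0 := hsmall h₂ hb2 this
    apply hab
    have e1 : a.1 = b.1 := by
      have : (a.1 : ℤ) = (b.1 : ℤ) := by omega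
      exact Fin.ext (by exact_mod_cast this)
    have e2 : a.2 = b.2 := by
      have : (a.2 : ℤ) = (b.2 : ℤ) := by omega
      exact Fin.ext (by exact_mod_cast this)
    exact Prod.ext e1 e2
  have h2ne : h₂ ≠ 0 := by
    intro h0
    have hd1 : (N : ℤ) ∣ h₁ * g₁ := by
      have : h₂ * g₂ = 0 := by rw [h0]; ring
      simpa [this] using hdvd
    have : (N : ℤ) ∣ h₁ := (hNprime.dvd_mul.mp hd1).resolve_right hng1
    have h1z : h₁ = 0 := hsmall h₁ hb1 this
    apply hab
    have e1 : a.1 = b.1 := by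
      have : (a.1 : ℤ) = (b.1 : ℤ) := by omega
      exact Fin.ext (by exact_mod_cast this)
    have e2 : a.2 = b.2 := by
      have : (a.2 : ℤ) = (b.2 : ℤ) := by omega
      exact Fin.ext (by exact_mod_cast this)
    exact Prod.ext e1 e2
  have hsqrt : ((n : ℤ) : ℝ) ≤ Real.sqrt N := by
    rw [Real.le_sqrt (by positivity) (by positivity)]
    push_cast
    exact_mod_cast Nat.sqrt_le' N
  refine ⟨h₁, h₂, Int.emod_eq_zero_of_dvd hdvd,
    abs_pos.mpr h1ne, ?_, abs_pos.mpr h2ne, ?_⟩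
  · exact le_trans (by exact_mod_cast hb1) hsqrt
  · exact le_trans (by exact_mod_cast hb2) hsqrt
end

section
/- Let (γ_j)_{j≥1} be non-negative reals and (Γ_ℓ)_{ℓ≥0} be non-negative with Γ_ℓ ≤ c (ℓ!)^{1/λ} for all ℓ and some c > 0, λ > 0. Define POD weights γ_u = Γ_{|u|} ∏_{j∈u} γ_j. If α > 1/2, αλ > 1, and 2ζ(αλ) Σ_{j=1}^∞ γ_j^λ < 1, then Σ_{u ⊂ ℕ, |u|<∞} γ_u^λ (2ζ(αλ))^{|u|} ≤ c^λ (1 − 2ζ(αλ) Σ_j γ_j^λ)^{-1} < ∞. -/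
/-!
Bounding `Γ_ℓ^λ ≤ c^λ ℓ!` turns each term into at most `c^λ |u|! ∏_{j∈u} x_j` with
`x_j = 2ζ(αλ) γ_j^λ`. Grouping subsets by size, `k! ∑_{|u|=k} ∏_{j∈u} x_j ≤ (∑_j x_j)^k` (the
`0/1` multi-indices in the multinomial expansion), so the whole sum is dominated by the geometric
series `c^λ ∑_k q^k` with `q = ∑_j x_j < 1`.
-/

open Finset

open scoped Nat

namespace Finset

variable {ι : Type*}

lemma factorial_mul_sum_powersetCard_prod_le_sum_pow {R : Type*} [CommSemiring R] [PartialOrder R]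
    [IsOrderedRing R] (s : Finset ι) {x : ι → R} (hx : ∀ i ∈ s, 0 ≤ x i) (n : ℕ) :
    (n ! : R) * ∑ u ∈ s.powersetCard n, ∏ i ∈ u, x i ≤ (∑ i ∈ s, x i) ^ n := by
  classical
  -- `u` becomes the `0/1` multi-index `ind u`, whose multinomial coefficient is `n!`.
  let ind (u : Finset ι) (i : ι) : ℕ := if i ∈ u then 1 else 0
  have h_inj : Function.Injective ind := fun u v huv => by
    ext i
    have := congrFun huv i
    by_cases i ∈ u <;> by_cases i ∈ v <;> simp_all [ind]
  have h_sum : ∀ u ⊆ s, ∑ i ∈ s, ind u i = u.card := fun u hus => by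
    simp [ind, inter_eq_right.2 hus]
  have h_term : ∀ u ∈ s.powersetCard n,
      (n ! : R) * ∏ i ∈ u, x i = Nat.multinomial s (ind u) * ∏ i ∈ s, x i ^ ind u i := by
    intro u hu
    obtain ⟨hus, rfl⟩ := mem_powersetCard.1 hu
    have h_prod : ∏ i ∈ s, x i ^ ind u i = ∏ i ∈ u, x i := by
      simp [ind, pow_ite, prod_ite_mem, inter_eq_right.2 hus]
    rw [h_prod, Nat.multinomial, h_sum u hus]
    simp [ind, apply_ite]
  have h_maps : (s.powersetCard n).map ⟨ind, h_inj⟩ ⊆ piAntidiag s n := by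
    intro k hk
    obtain ⟨u, hu, rfl⟩ := mem_map.1 hk
    obtain ⟨hus, rfl⟩ := mem_powersetCard.1 hu
    refine mem_piAntidiag.2 ⟨h_sum u hus, fun i hi => hus ?_⟩
    simpa [ind] using hi
  rw [sum_pow_eq_sum_piAntidiag, mul_sum, sum_congr rfl h_term]
  calc ∑ u ∈ s.powersetCard n, (Nat.multinomial s (ind u) : R) * ∏ i ∈ s, x i ^ ind u i
      = ∑ k ∈ (s.powersetCard n).map ⟨ind, h_inj⟩,
          (Nat.multinomial s k : R) * ∏ i ∈ s, x i ^ k i := by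
        rw [sum_map]; rfl
    _ ≤ _ := sum_le_sum_of_subset_of_nonneg h_maps fun k _ _ =>
        mul_nonneg (Nat.cast_nonneg _) (prod_nonneg fun i hi => pow_nonneg (hx i hi) _)

lemma sum_powerset_factorial_mul_prod_le {R : Type*} [CommSemiring R] [PartialOrder R]
    [IsOrderedRing R] (s : Finset ι) {x : ι → R} (hx : ∀ i ∈ s, 0 ≤ x i) :
    ∑ u ∈ s.powerset, (u.card ! : R) * ∏ i ∈ u, x i ≤
      ∑ k ∈ range (s.card + 1), (∑ i ∈ s, x i) ^ k := by
  calc ∑ u ∈ s.powerset, (u.card ! : R) * ∏ i ∈ u, x i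
      = ∑ k ∈ range (s.card + 1), ∑ u ∈ s.powersetCard k, (u.card ! : R) * ∏ i ∈ u, x i := by
        rw [powerset_card_disjiUnion]; exact sum_disjiUnion _ _ _
    _ = ∑ k ∈ range (s.card + 1), (k ! : R) * ∑ u ∈ s.powersetCard k, ∏ i ∈ u, x i := by
        refine sum_congr rfl fun k _ => ?_
        rw [mul_sum]
        exact sum_congr rfl fun u hu => by rw [(mem_powersetCard.1 hu).2]
    _ ≤ _ := sum_le_sum fun k _ => factorial_mul_sum_powersetCard_prod_le_sum_pow s hx k

lemma sum_factorial_mul_prod_le_of_tsum_lt_one {x : ι → ℝ} (hx : ∀ i, 0 ≤ x i)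
    (hs : Summable x) (hlt : ∑' i, x i < 1) (t : Finset (Finset ι)) :
    ∑ u ∈ t, (u.card ! : ℝ) * ∏ i ∈ u, x i ≤ (1 - ∑' i, x i)⁻¹ := by
  classical
  have hq : 0 ≤ ∑' i, x i := tsum_nonneg hx
  set s := t.sup id
  have h_sum_le : ∑ i ∈ s, x i ≤ ∑' i, x i := hs.sum_le_tsum s fun i _ => hx i
  calc ∑ u ∈ t, (u.card ! : ℝ) * ∏ i ∈ u, x i
      ≤ ∑ u ∈ s.powerset, (u.card ! : ℝ) * ∏ i ∈ u, x i :=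
        sum_le_sum_of_subset_of_nonneg (fun u hu => mem_powerset.2 (le_sup (f := id) hu))
          fun u _ _ => mul_nonneg (Nat.cast_nonneg _) (prod_nonneg fun i _ => hx i)
    _ ≤ ∑ k ∈ range (s.card + 1), (∑ i ∈ s, x i) ^ k :=
        sum_powerset_factorial_mul_prod_le s fun i _ => hx i
    _ ≤ ∑ k ∈ range (s.card + 1), (∑' i, x i) ^ k :=
        sum_le_sum fun k _ => pow_le_pow_left₀ (sum_nonneg fun i _ => hx i) h_sum_le k
    _ ≤ (1 - ∑' i, x i)⁻¹ := by
        rw [← tsum_geometric_of_lt_one hq hlt]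
        exact (summable_geometric_of_lt_one hq hlt).sum_le_tsum _ fun k _ => pow_nonneg hq k

end Finset

lemma Real.rpow_le_mul_of_le_mul_rpow_one_div {a b c p : ℝ} (ha : 0 ≤ a) (hb : 0 ≤ b)
    (hc : 0 ≤ c) (hp : 0 < p) (h : a ≤ c * b ^ (1 / p)) : a ^ p ≤ c ^ p * b := by
  calc a ^ p ≤ (c * b ^ (1 / p)) ^ p := Real.rpow_le_rpow ha h hp.le
    _ = c ^ p * b := by
      rw [Real.mul_rpow hc (Real.rpow_nonneg hb _), ← Real.rpow_mul hb, one_div_mul_cancel hp.ne',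
        Real.rpow_one]

lemma pod_weight_rpow_mul_pow_le {ι : Type*} {γ : ι → ℝ} (hγ : ∀ j, 0 ≤ γ j) {Γ : ℕ → ℝ}
    (hΓ0 : ∀ ℓ, 0 ≤ Γ ℓ) {c lam Z : ℝ} (hc : 0 ≤ c) (hlam : 0 < lam) (hZ : 0 ≤ Z)
    (hΓ : ∀ ℓ : ℕ, Γ ℓ ≤ c * (ℓ ! : ℝ) ^ (1 / lam)) (u : Finset ι) :
    (Γ u.card * ∏ j ∈ u, γ j) ^ lam * Z ^ u.card ≤
      c ^ lam * ((u.card ! : ℝ) * ∏ j ∈ u, γ j ^ lam * Z) := by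
  have hΓ_rpow := Real.rpow_le_mul_of_le_mul_rpow_one_div (hΓ0 _) (Nat.cast_nonneg _) hc hlam
    (hΓ u.card)
  rw [Real.mul_rpow (hΓ0 _) (prod_nonneg fun j _ => hγ j),
    ← Real.finsetProd_rpow u γ (fun j _ => hγ j), prod_mul_distrib, prod_const]
  calc Γ u.card ^ lam * (∏ j ∈ u, γ j ^ lam) * Z ^ u.card
      ≤ c ^ lam * u.card ! * (∏ j ∈ u, γ j ^ lam) * Z ^ u.card := by
        gcongr
        exact prod_nonneg fun j _ => Real.rpow_nonneg (hγ j) _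
    _ = _ := by ring

theorem pod_weights_tractability_sum_general (γ : ℕ → ℝ) (hγ : ∀ j, 0 ≤ γ j)
    (Γ : ℕ → ℝ) (hΓ0 : ∀ ℓ, 0 ≤ Γ ℓ)
    (c : ℝ) (hc : 0 < c) (lam : ℝ) (hlam : 0 < lam)
    (hΓ : ∀ ℓ : ℕ, Γ ℓ ≤ c * (ℓ.factorial : ℝ) ^ (1 / lam))
    (α : ℝ)
    (hsum : Summable (fun j => γ j ^ lam))
    (hsmall : (2 * ∑' n : ℕ, 1 / ((n : ℝ) + 1) ^ (α * lam)) * (∑' j : ℕ, γ j ^ lam) < 1) :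
    Summable (fun u : Finset ℕ =>
        (Γ u.card * ∏ j ∈ u, γ j) ^ lam *
          (2 * ∑' n : ℕ, 1 / ((n : ℝ) + 1) ^ (α * lam)) ^ u.card) ∧
      (∑' u : Finset ℕ,
          (Γ u.card * ∏ j ∈ u, γ j) ^ lam *
            (2 * ∑' n : ℕ, 1 / ((n : ℝ) + 1) ^ (α * lam)) ^ u.card) ≤
        c ^ lam *
          (1 - (2 * ∑' n : ℕ, 1 / ((n : ℝ) + 1) ^ (α * lam)) * (∑' j : ℕ, γ j ^ lam))⁻¹ := by
  set Z := 2 * ∑' n : ℕ, 1 / ((n : ℝ) + 1) ^ (α * lam)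
  have hZ : 0 ≤ Z := mul_nonneg zero_le_two (tsum_nonneg fun n => by positivity)
  have hx : ∀ j, 0 ≤ γ j ^ lam * Z := fun j => mul_nonneg (Real.rpow_nonneg (hγ j) _) hZ
  have htsum : ∑' j, γ j ^ lam * Z = Z * ∑' j, γ j ^ lam := by rw [tsum_mul_right, mul_comm]
  have hbound : ∀ t : Finset (Finset ℕ),
      ∑ u ∈ t, (Γ u.card * ∏ j ∈ u, γ j) ^ lam * Z ^ u.card ≤
        c ^ lam * (1 - Z * ∑' j, γ j ^ lam)⁻¹ := fun t => by
    rw [← htsum]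
    refine (sum_le_sum fun u _ => pod_weight_rpow_mul_pow_le hγ hΓ0 hc.le hlam hZ hΓ u).trans ?_
    rw [← mul_sum]
    gcongr
    exact sum_factorial_mul_prod_le_of_tsum_lt_one hx (hsum.mul_right Z) (htsum ▸ hsmall) t
  have hnonneg : ∀ u : Finset ℕ, 0 ≤ (Γ u.card * ∏ j ∈ u, γ j) ^ lam * Z ^ u.card := fun u =>
    mul_nonneg (Real.rpow_nonneg (mul_nonneg (hΓ0 _) (prod_nonneg fun j _ => hγ j)) _)
      (pow_nonneg hZ _)
  have hsummable := summable_of_sum_le hnonneg hbound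
  exact ⟨hsummable, hsummable.tsum_le_of_sum_le hbound⟩

theorem pod_weights_tractability_sum (γ : ℕ → ℝ) (hγ : ∀ j, 0 ≤ γ j)
    (Γ : ℕ → ℝ) (hΓ0 : ∀ ℓ, 0 ≤ Γ ℓ)
    (c : ℝ) (hc : 0 < c) (lam : ℝ) (hlam : 0 < lam)
    (hΓ : ∀ ℓ : ℕ, Γ ℓ ≤ c * (ℓ.factorial : ℝ) ^ (1 / lam))
    (α : ℝ) (hα : 1 / 2 < α) (hαlam : 1 < α * lam)
    (hsum : Summable (fun j => γ j ^ lam))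
    (hsmall : (2 * ∑' n : ℕ, 1 / ((n : ℝ) + 1) ^ (α * lam)) * (∑' j : ℕ, γ j ^ lam) < 1) :
    Summable (fun u : Finset ℕ =>
        (Γ u.card * ∏ j ∈ u, γ j) ^ lam *
          (2 * ∑' n : ℕ, 1 / ((n : ℝ) + 1) ^ (α * lam)) ^ u.card) ∧
      (∑' u : Finset ℕ,
          (Γ u.card * ∏ j ∈ u, γ j) ^ lam *
            (2 * ∑' n : ℕ, 1 / ((n : ℝ) + 1) ^ (α * lam)) ^ u.card) ≤
        c ^ lam *
          (1 - (2 * ∑' n : ℕ, 1 / ((n : ℝ) + 1) ^ (α * lam)) * (∑' j : ℕ, γ j ^ lam))⁻¹ :=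
  pod_weights_tractability_sum_general γ hγ Γ hΓ0 c hc lam hlam hΓ α hsum hsmall
end

section
/- Let α > 1/2, d ∈ ℕ, non-negative weights γ_u for u ⊆ [1:d] with γ_∅ = 1, and M > 0. With A_d = {k ∈ ℤ^d : r_{α,γ}(k) ≤ M} nonempty, the maximal componentwise span N_{A_d} := max_{j=1,…,d} (max_{k∈A_d} k_j − min_{h∈A_d} h_j) satisfies N_{A_d} = 2 max_{j} max_{u ⊆ [1:d], j ∈ u} ⌊(γ_u M)^{1/α}⌋. -/
open Finset

/-- The maximal componentwise span `N_{A_d}` of a nonempty set `A ⊆ ℤ^d`. -/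
noncomputable def spanOf {d : ℕ} (A : Set (Fin d → ℤ)) : ℤ :=
  sSup {x : ℤ | ∃ j : Fin d,
    x = sSup {y : ℤ | ∃ k ∈ A, k j = y} - sInf {y : ℤ | ∃ h ∈ A, h j = y}}

lemma fsupp_update_neg {d : ℕ} (k : Fin d → ℤ) (j : Fin d) :
    fsupp (Function.update k j (-(k j))) = fsupp k := by
  ext i
  simp only [fsupp, mem_filter, mem_univ, true_and]
  rcases eq_or_ne i j with rfl | h
  · simp
  · simp [Function.update_of_ne h]

lemma flip_mem {d : ℕ} {α : ℝ} {γ : Finset (Fin d) → ℝ} {M : ℝ}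
    {k : Fin d → ℤ} (hk : k ∈ hyperCross α γ M) (j : Fin d) :
    Function.update k j (-(k j)) ∈ hyperCross α γ M := by
  obtain ⟨h1, h2⟩ := hk
  rw [hyperCross, Set.mem_setOf_eq, fsupp_update_neg]
  refine ⟨h1, le_trans (le_of_eq ?_) h2⟩
  apply Finset.prod_congr rfl
  intro i _
  rcases eq_or_ne i j with rfl | h
  · simp
  · simp [Function.update_of_ne h]

theorem hyperCross_span_eq {d : ℕ} (hd : 0 < d) (α : ℝ) (hα : 1 / 2 < α)
    (γ : Finset (Fin d) → ℝ) (hγ : ∀ u, 0 ≤ γ u) (hγe : γ ∅ = 1)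
    (M : ℝ) (hM : 0 < M) (hne : (hyperCross α γ M).Nonempty) :
    spanOf (hyperCross α γ M) =
      2 * sSup {x : ℤ | ∃ j : Fin d, ∃ u : Finset (Fin d), j ∈ u ∧
        x = ⌊(γ u * M) ^ (1 / α)⌋} := by
  have hα0 : 0 < α := by linarith
  set A := hyperCross α γ M with hA
  set T : Set ℤ := {x : ℤ | ∃ j : Fin d, ∃ u : Finset (Fin d), j ∈ u ∧
      x = ⌊(γ u * M) ^ (1 / α)⌋} with hT
  have hTbdd : BddAbove T := by
    refine ⟨Finset.univ.sup' ⟨∅, Finset.mem_univ ∅⟩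
      (fun u : Finset (Fin d) => ⌊(γ u * M) ^ (1 / α)⌋), ?_⟩
    rintro x ⟨j, u, hju, rfl⟩
    exact Finset.le_sup' (fun u : Finset (Fin d) => ⌊(γ u * M) ^ (1 / α)⌋) (Finset.mem_univ u)
  let j0 : Fin d := ⟨0, hd⟩
  have hTne : T.Nonempty := ⟨⌊(γ {j0} * M) ^ (1 / α)⌋, j0, {j0}, Finset.mem_singleton_self j0, rfl⟩
  set N := sSup T with hN
  have hNmem : N ∈ T := Int.csSup_mem hTne hTbdd
  have hN0 : 0 ≤ N := by
    obtain ⟨j, u, hju, h⟩ := hNmem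
    rw [h]
    exact Int.floor_nonneg.mpr (Real.rpow_nonneg (mul_nonneg (hγ u) hM.le) _)
  -- key bound: every coordinate of every element of A is ≤ N in absolute value
  have key : ∀ k ∈ A, ∀ j : Fin d, |k j| ≤ N := by
    intro k hk j
    rcases eq_or_ne (k j) 0 with h0 | h0
    · simp [h0, hN0]
    · have hju : j ∈ fsupp k := by simp [fsupp, h0]
      obtain ⟨h1, h2⟩ := hk
      have hfac : ∀ i ∈ fsupp k, (1:ℝ) ≤ |(k i : ℝ)| ^ α := by
        intro i hi
        apply Real.one_le_rpow _ hα0.le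
        have hne0 : k i ≠ 0 := by simpa [fsupp] using hi
        rw [← Int.cast_abs]
        exact_mod_cast Int.one_le_abs hne0
      have herase : (1:ℝ) ≤ ∏ i ∈ (fsupp k).erase j, (|(k i : ℝ)|) ^ α :=
        calc (1:ℝ) = ∏ _i ∈ (fsupp k).erase j, (1:ℝ) := (Finset.prod_const_one).symm
          _ ≤ ∏ i ∈ (fsupp k).erase j, (|(k i : ℝ)|) ^ α :=
            Finset.prod_le_prod (fun i _ => zero_le_one)
              (fun i hi => hfac i (Finset.mem_of_mem_erase hi))
      have h3 : (|(k j : ℝ)|) ^ α ≤ ∏ i ∈ fsupp k, (|(k i : ℝ)|) ^ α := by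
        rw [← Finset.mul_prod_erase _ _ hju]
        exact le_mul_of_one_le_right (Real.rpow_nonneg (abs_nonneg _) α) herase
      have h4 : (|(k j : ℝ)|) ^ α ≤ γ (fsupp k) * M := by
        calc (|(k j : ℝ)|) ^ α ≤ M * γ (fsupp k) := h3.trans h2
          _ = γ (fsupp k) * M := mul_comm _ _
      have h5 : |(k j : ℝ)| ≤ (γ (fsupp k) * M) ^ (1 / α) := by
        have h6 := Real.rpow_le_rpow (Real.rpow_nonneg (abs_nonneg _) α) h4
          (by positivity : (0:ℝ) ≤ 1/α)
        rw [one_div]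
        rwa [one_div, Real.rpow_rpow_inv (abs_nonneg _) hα0.ne'] at h6
      have h7 : |k j| ≤ ⌊(γ (fsupp k) * M) ^ (1 / α)⌋ := by
        rw [Int.le_floor]
        push_cast
        exact h5
      exact h7.trans (le_csSup hTbdd ⟨j, fsupp k, hju, rfl⟩)
  -- coordinate sets
  set C : Fin d → Set ℤ := fun j => {y : ℤ | ∃ k ∈ A, k j = y} with hC
  have hCne : ∀ j, (C j).Nonempty := by
    intro j
    obtain ⟨k, hk⟩ := hne
    exact ⟨k j, k, hk, rfl⟩
  have hCbdd : ∀ j, BddAbove (C j) := by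
    intro j
    refine ⟨N, ?_⟩
    rintro y ⟨k, hk, rfl⟩
    exact (le_abs_self _).trans (key k hk j)
  have hCsymm : ∀ j, ∀ y ∈ C j, -y ∈ C j := by
    rintro j y ⟨k, hk, rfl⟩
    exact ⟨Function.update k j (-(k j)), flip_mem hk j, by simp⟩
  have hCsup_mem : ∀ j, sSup (C j) ∈ C j := fun j => Int.csSup_mem (hCne j) (hCbdd j)
  have hCsup_nonneg : ∀ j, 0 ≤ sSup (C j) := by
    intro j
    obtain ⟨y, hy⟩ := hCne j
    have h1 := le_csSup (hCbdd j) hy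
    have h2 := le_csSup (hCbdd j) (hCsymm j y hy)
    omega
  have hCsup_le : ∀ j, sSup (C j) ≤ N := by
    intro j
    apply csSup_le (hCne j)
    rintro y ⟨k, hk, rfl⟩
    exact (le_abs_self _).trans (key k hk j)
  have hCinf : ∀ j, sInf (C j) = -sSup (C j) := by
    intro j
    apply IsLeast.csInf_eq
    constructor
    · exact hCsymm j _ (hCsup_mem j)
    · intro y hy
      have := le_csSup (hCbdd j) (hCsymm j y hy)
      omega
  -- existence of a j achieving sSup (C j) = N
  have hex : ∃ j, sSup (C j) = N := by
    rcases eq_or_lt_of_le hN0 with h0 | h1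
    · refine ⟨j0, ?_⟩
      have h2 := hCsup_le j0
      have h3 := hCsup_nonneg j0
      omega
    · obtain ⟨j, u, hju, hNu⟩ := hNmem
      have hfloor : (N : ℝ) ≤ (γ u * M) ^ (1 / α) := by
        rw [hNu]; exact Int.floor_le _
      have hpos : 0 < γ u * M := by
        rcases (mul_nonneg (hγ u) hM.le).lt_or_eq with h | h
        · exact h
        · exfalso
          rw [← h, Real.zero_rpow (by positivity : (1:ℝ)/α ≠ 0)] at hfloor
          have : (0:ℝ) < (N:ℝ) := by exact_mod_cast h1
          linarith
      have hγu : 0 < γ u := by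
        rcases (hγ u).lt_or_eq with h | h
        · exact h
        · exfalso
          rw [← h, zero_mul] at hpos
          exact lt_irrefl 0 hpos
      refine ⟨j, le_antisymm (hCsup_le j) ?_⟩
      -- construct the maximizer
      set kk : Fin d → ℤ := fun i => if i = j then N else if i ∈ u then 1 else 0 with hkk
      have hsupp : fsupp kk = u := by
        ext i
        simp only [fsupp, mem_filter, mem_univ, true_and, hkk]
        rcases eq_or_ne i j with rfl | h
        · simpa [hju] using h1.ne'
        · by_cases hi : i ∈ u <;> simp [h, hi]
      have hprod : ∏ i ∈ u, (|(kk i : ℝ)|) ^ α = ((N : ℝ)) ^ α := by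
        rw [Finset.prod_eq_single_of_mem j hju]
        · simp [hkk, abs_of_nonneg (by exact_mod_cast hN0 : (0:ℝ) ≤ (N:ℝ))]
        · intro i hi hij
          simp [hkk, hij, hi, Real.one_rpow]
      have hkkA : kk ∈ A := by
        rw [hA, hyperCross, Set.mem_setOf_eq, hsupp]
        refine ⟨hγu, ?_⟩
        rw [hprod]
        have : ((N:ℝ)) ^ α ≤ ((γ u * M) ^ (1/α)) ^ α :=
          Real.rpow_le_rpow (by exact_mod_cast hN0) hfloor hα0.le
        rw [one_div, Real.rpow_inv_rpow hpos.le hα0.ne'] at this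
        linarith [this, mul_comm (γ u) M]
      have hmem : N ∈ C j := ⟨kk, hkkA, by simp [hkk]⟩
      exact le_csSup (hCbdd j) hmem
  -- conclude
  rw [spanOf]
  have hset : {x : ℤ | ∃ j : Fin d,
      x = sSup {y : ℤ | ∃ k ∈ A, k j = y} - sInf {y : ℤ | ∃ h ∈ A, h j = y}} =
      {x : ℤ | ∃ j : Fin d, x = 2 * sSup (C j)} := by
    ext x
    constructor
    · rintro ⟨j, rfl⟩
      exact ⟨j, by rw [show {y : ℤ | ∃ h ∈ A, h j = y} = C j from rfl, hCinf j]; ring⟩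
    · rintro ⟨j, rfl⟩
      exact ⟨j, by rw [show {y : ℤ | ∃ h ∈ A, h j = y} = C j from rfl, hCinf j]; ring⟩
  rw [hset]
  apply IsGreatest.csSup_eq
  constructor
  · obtain ⟨j, hj⟩ := hex
    exact ⟨j, by rw [hj]⟩
  · rintro x ⟨j, rfl⟩
    have := hCsup_le j
    omega
end
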